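/- For every m ∈ ℕ the unital *-homomorphism j^{(m)} preserves the marginal laws: Φ̃^{(m)} ∘ j₁^{(m)} = φ₁ on 𝒜₁ and Φ̃^{(m)} ∘ j₂^{(m)} = φ₂ on 𝒜₂. (Proposition 3.1) -/

import Mathlib

/-! Call *normal form* an element `(x₁ ⊗ ⋯ ⊗ xₘ) ⊗ (y₁ ⊗ ⋯ ⊗ yₘ)` of `𝒜̃^{(m)}` whose `xₖ` are
words in the generators of `𝒜₁` and whose `yₗ` are powers of `t`. Since the Boolean extensions
see `t`-powers as `1`, `Φ̃` takes the value `φ₁(x₁) ψ₁(x₂) ⋯ ψ₁(xₘ)` on it, independently of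
the `yₗ`. Multiplying a normal form by the `k`-th summand of `j₁(a)` gives the normal form with
`a` appended at site `k` minus the one with `a` appended at site `k + 1` (both with more
`t`-powers), so after applying `Φ̃` the sum over `k` telescopes; as `i_{m+1,m}(a) = 0`, only
`a` appended at site `1` remains. By induction, `Φ̃(j₁(a₁ ⋯ aₙ)) = φ₁(a₁ ⋯ aₙ) ψ₁(1)^{m-1}`, and words span `𝒜₁`. The
second marginal is the same computation with the two tensor blocks exchanged. -/

open scoped ComplexOrder TensorProduct

/-- `w` is a non-empty word in the generating set `G`. -/
def IsWord {R : Type*} [Monoid R] (G : Set R) (w : R) : Prop :=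
  ∃ l : List R, l ≠ [] ∧ (∀ x ∈ l, x ∈ G) ∧ w = l.prod

/-- `φ` is a state on the unital complex *-algebra `R`. -/
def IsState {R : Type*} [Ring R] [Algebra ℂ R] [StarRing R] (φ : R →ₗ[ℂ] ℂ) : Prop :=
  φ 1 = 1 ∧ ∀ x, 0 ≤ φ (x * star x)

/-- The ordered product `f a * f (a+1) * ⋯ * f b` (an empty product if `b < a`). -/
def ordProd {T : Type*} [Monoid T] (f : ℕ → T) (a b : ℕ) : T :=
  ((List.range' a (b + 1 - a)).map f).prod

/-- The element `t_{[k,m]}`: `g` at the tensor sites `k, …, m` (1-based), with the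
convention `t_{[0,m]} = 0`. -/
def tBlock {T : Type*} [Ring T] (g : ℕ → T) (k m : ℕ) : T :=
  if k = 0 then 0 else ordProd g k m

/-- The embedding at tensor site `k` among the sites `1, …, m`, with value `0` out of
range (the convention `i_{m+1,m}(a) = 0`). -/
def embSite {T R : Type*} [Ring T] (e : ℕ → R → T) (m k : ℕ) (x : R) : T :=
  if 1 ≤ k ∧ k ≤ m then e k x else 0

/-- `φt` is the Boolean extension of the state `φ` to the free product `S = R * ℂ[t]`
(with canonical embedding `ι : R → S` and separator `t`):  one has `φt 1 = 1` and
`φt (t^{e₀} w₁ t^{e₁} ⋯ wₙ t^{eₙ}) = φ(w₁) ⋯ φ(wₙ)` for all non-empty words `wᵢ` in the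
generating set `G` and all exponents with `e₁, …, e_{n-1} > 0`. -/
def IsBooleanExt {R S : Type*} [Ring R] [Algebra ℂ R] [Ring S] [Algebra ℂ S]
    (G : Set R) (ι : R → S) (t : S) (φ : R →ₗ[ℂ] ℂ) (φt : S →ₗ[ℂ] ℂ) : Prop :=
  φt 1 = 1 ∧
  ∀ (n : ℕ) (w : ℕ → R) (e : ℕ → ℕ),
    (∀ i < n, IsWord G (w i)) →
    (∀ i, 0 < i → i < n → 0 < e i) →
    φt (((List.range n).map fun i => t ^ e i * ι (w i)).prod * t ^ e n) =
      ((List.range n).map fun i => φ (w i)).prod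

section OrdProd

variable {M : Type*} [Monoid M] {f g : ℕ → M} {a b : ℕ}

lemma ordProd_of_lt (h : b < a) : ordProd f a b = 1 := by
  simp [ordProd, Nat.sub_eq_zero_of_le h]

lemma ordProd_succ (h : a ≤ b + 1) : ordProd f a (b + 1) = ordProd f a b * f (b + 1) := by
  rw [ordProd, ordProd, show b + 1 + 1 - a = b + 1 - a + 1 by omega, List.range'_concat,
    show a + 1 * (b + 1 - a) = b + 1 by omega]
  simp

lemma ordProd_eq_mul_ordProd_succ (h : a ≤ b) : ordProd f a b = f a * ordProd f (a + 1) b := by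
  rw [ordProd, ordProd, show b + 1 - a = b + 1 - (a + 1) + 1 by omega, List.range'_succ]
  simp

lemma ordProd_congr (h : ∀ l, a ≤ l → l ≤ b → f l = g l) : ordProd f a b = ordProd g a b := by
  refine congrArg List.prod (List.map_congr_left fun l hl => ?_)
  rw [List.mem_range'_1] at hl
  exact h l hl.1 (by omega)

lemma ordProd_eq_one (h : ∀ l, a ≤ l → l ≤ b → f l = 1) : ordProd f a b = 1 :=
  (ordProd_congr h).trans (List.prod_eq_one (by simp))

lemma ordProd_eq_ordProd_of_eq_one {c : ℕ} (hac : a ≤ c) (hcb : c ≤ b + 1)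
    (h : ∀ l, a ≤ l → l < c → f l = 1) : ordProd f a b = ordProd f c b := by
  induction c, hac using Nat.le_induction with
  | base => rfl
  | succ c hac ih =>
    rw [ih (by omega) fun l hl hlc => h l hl (by omega), ordProd_eq_mul_ordProd_succ (by omega),
      h c hac (by omega), one_mul]

lemma Commute.ordProd_right {x : M} (h : ∀ l, a ≤ l → l ≤ b → Commute x (f l)) :
    Commute x (ordProd f a b) := by
  refine Commute.list_prod_right _ _ fun y hy => ?_
  obtain ⟨l, hl, rfl⟩ := List.mem_map.mp hy
  rw [List.mem_range'_1] at hl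
  exact h l hl.1 (by omega)

lemma Commute.ordProd_ordProd {a' b' : ℕ} (h : ∀ l l', Commute (f l) (g l')) :
    Commute (ordProd f a b) (ordProd g a' b') :=
  Commute.ordProd_right fun l' _ _ => (Commute.ordProd_right fun l _ _ => (h l l').symm).symm

lemma ordProd_mul_ordProd (h : ∀ l l', l < l' → Commute (f l') (g l)) :
    ordProd f a b * ordProd g a b = ordProd (fun l => f l * g l) a b := by
  induction b with
  | zero =>
    rcases Nat.eq_zero_or_pos a with rfl | ha
    · simp [ordProd]
    · simp [ordProd_of_lt ha]
  | succ b ih =>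
    rcases Nat.lt_or_ge (b + 1) a with hba | hab
    · simp [ordProd_of_lt hba]
    · have hcomm : Commute (f (b + 1)) (ordProd g a b) :=
        Commute.ordProd_right fun l _ hl => h l (b + 1) (by omega)
      rw [ordProd_succ hab, ordProd_succ hab, ordProd_succ hab, ← ih, mul_assoc,
        ← mul_assoc (f (b + 1)), hcomm.eq]
      simp only [mul_assoc]

end OrdProd

/-- `φ ⊗ ψ ⊗ ⋯ ⊗ ψ` (`m` factors) evaluated at `X 1 ⊗ ⋯ ⊗ X m`. -/
def prodState {R : Type*} (φ ψ : R → ℂ) (m : ℕ) (X : ℕ → R) : ℂ :=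
  ordProd (fun k => if k = 1 then φ (X k) else ψ (X k)) 1 m

lemma prodState_mulSingle_one {R : Type*} [Monoid R] {φ ψ : R → ℂ} {m : ℕ} (hψ : ψ 1 = 1)
    (hm : 1 ≤ m) (w : R) : prodState φ ψ m (Pi.mulSingle 1 w) = φ w := by
  rw [prodState, ordProd_eq_mul_ordProd_succ hm, if_pos rfl, Pi.mulSingle_eq_same,
    ordProd_eq_one fun k hk _ => by simp [show k ≠ 1 by omega, hψ], mul_one]

section NormalForm

variable {A B T : Type*} [Monoid A] [Monoid B] [Monoid T] {E : ℕ → A →* T} {F : ℕ → B →* T}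
  {m : ℕ}

variable (E F m) in
/-- `(X 1 ⊗ ⋯ ⊗ X m) ⊗ (Y 1 ⊗ ⋯ ⊗ Y m)` when `E` and `F` are the site embeddings of the two
tensor blocks. -/
def normalForm (X : ℕ → A) (Y : ℕ → B) : T :=
  ordProd (fun k => E k (X k)) 1 m * ordProd (fun l => F l (Y l)) 1 m

lemma normalForm_mul (hEE : ∀ k k', k ≠ k' → ∀ x y, Commute (E k x) (E k' y))
    (hFF : ∀ l l', l ≠ l' → ∀ x y, Commute (F l x) (F l' y))
    (hEF : ∀ k l x y, Commute (E k x) (F l y)) (X X' : ℕ → A) (Y Y' : ℕ → B) :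
    normalForm E F m X Y * normalForm E F m X' Y' = normalForm E F m (X * X') (Y * Y') := by
  have hswap : Commute (ordProd (fun l => F l (Y l)) 1 m) (ordProd (fun k => E k (X' k)) 1 m) :=
    Commute.ordProd_ordProd fun l k => (hEF k l _ _).symm
  simp only [normalForm, Pi.mul_apply, map_mul]
  rw [← ordProd_mul_ordProd fun k k' h => hEE k' k (by omega) (X k') (X' k),
    ← ordProd_mul_ordProd fun l l' h => hFF l' l (by omega) (Y l') (Y' l),
    mul_assoc, ← mul_assoc (ordProd _ 1 m) (ordProd _ 1 m) (ordProd _ 1 m), hswap.eq]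
  simp only [mul_assoc]

lemma normalForm_swap (hEF : ∀ k l x y, Commute (E k x) (F l y)) (X : ℕ → A) (Y : ℕ → B) :
    normalForm E F m X Y = normalForm F E m Y X :=
  (Commute.ordProd_ordProd fun k l => hEF k l (X k) (Y l)).eq

lemma normalForm_one : normalForm E F m 1 1 = 1 := by
  simp [normalForm, ordProd_eq_one]

lemma normalForm_mulSingle_one {c : ℕ} (hc : 1 ≤ c) (hcm : c ≤ m) (a : A) :
    normalForm E F m (Pi.mulSingle c a) 1 = E c a := by
  rw [normalForm, ordProd_eq_ordProd_of_eq_one hc (by omega) fun l _ hl => by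
      simp [Pi.mulSingle_eq_of_ne (show l ≠ c by omega)],
    ordProd_eq_mul_ordProd_succ hcm, Pi.mulSingle_eq_same,
    ordProd_eq_one fun l hl _ => by simp [Pi.mulSingle_eq_of_ne (show l ≠ c by omega)]]
  simp [ordProd_eq_one]

lemma normalForm_one_indicator {k : ℕ} (hk : 1 ≤ k) (τ : B) :
    normalForm E F m 1 (fun l => if k ≤ l then τ else 1) = ordProd (fun l => F l τ) k m := by
  rw [normalForm, ordProd_eq_one fun k _ _ => by rw [Pi.one_apply, map_one], one_mul]
  rcases Nat.lt_or_ge (m + 1) k with hmk | hkm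
  · rw [ordProd_of_lt (f := fun l => F l τ) (show m < k by omega),
      ordProd_eq_one fun l _ hl => by simp [show ¬ k ≤ l by omega]]
  rw [ordProd_eq_ordProd_of_eq_one hk hkm fun l _ hl => by simp [show ¬ k ≤ l by omega]]
  exact ordProd_congr fun l hl _ => by rw [if_pos hl]

end NormalForm

lemma commute_embSite_tBlock {R T : Type*} [Ring T] {e : ℕ → R → T} {g : ℕ → T}
    (h : ∀ k l x, Commute (e k x) (g l)) (m c k : ℕ) (x : R) :
    Commute (embSite e m c x) (tBlock g k m) := by
  unfold embSite tBlock
  split_ifs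
  exacts [Commute.zero_right _, Commute.ordProd_right fun l _ _ => h c l x, Commute.zero_right _,
    Commute.zero_left _]

section Telescoping

variable {A B T V : Type*} [Monoid A] [Monoid B] [Ring T] [AddCommGroup V]
  {E : ℕ → A →* T} {F : ℕ → B →* T} {m : ℕ}

variable (E m) in
def jOnGenerator (u : ℕ → T) (a : A) : T :=
  ∑ k ∈ Finset.Icc 1 m,
    (embSite (fun l x => E l x) m k a - embSite (fun l x => E l x) m (k + 1) a) * tBlock u k m

lemma sum_tBlock_mul_eq_jOnGenerator {u : ℕ → T} (h : ∀ k l x, Commute (E k x) (u l)) (a : A) :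
    ∑ k ∈ Finset.Icc 1 m,
      tBlock u k m * (embSite (fun l x => E l x) m k a - embSite (fun l x => E l x) m (k + 1) a) =
      jOnGenerator E m u a :=
  Finset.sum_congr rfl fun k _ =>
    ((commute_embSite_tBlock h m k k a).sub_left (commute_embSite_tBlock h m (k + 1) k a)).eq.symm

lemma map_normalForm_mul_jOnGenerator_mul (hEE : ∀ k k', k ≠ k' → ∀ x y, Commute (E k x) (E k' y))
    (hFF : ∀ l l', l ≠ l' → ∀ x y, Commute (F l x) (F l' y))
    (hEF : ∀ k l x y, Commute (E k x) (F l y)) (hm : 1 ≤ m) (Φ : T →+ V) {S : Set A} {τ : B}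
    {R : T} {G : (ℕ → A) → V}
    (hR : ∀ X : ℕ → A, (∀ k, X k ∈ Submonoid.closure S) →
      ∀ Y : ℕ → B, (∀ l, Y l ∈ Submonoid.powers τ) → Φ (normalForm E F m X Y * R) = G X)
    {a : A} (ha : a ∈ S) {X : ℕ → A} (hX : ∀ k, X k ∈ Submonoid.closure S)
    {Y : ℕ → B} (hY : ∀ l, Y l ∈ Submonoid.powers τ) :
    Φ (normalForm E F m X Y * (jOnGenerator E m (fun l => F l τ) a * R)) =
      G (X * Pi.mulSingle 1 a) := by
  set W : ℕ → V := fun c => if 1 ≤ c ∧ c ≤ m then G (X * Pi.mulSingle c a) else 0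
  have hterm : ∀ k ∈ Finset.Icc 1 m, ∀ c, Φ (normalForm E F m X Y *
      (embSite (fun l x => E l x) m c a * tBlock (fun l => F l τ) k m * R)) = W c := by
    intro k hk c
    obtain ⟨hk1, -⟩ := Finset.mem_Icc.mp hk
    simp only [embSite, W]
    split_ifs with hc
    · rw [tBlock, if_neg (by omega), ← normalForm_mulSingle_one (F := F) hc.1 hc.2,
        ← normalForm_one_indicator (E := E) hk1, ← mul_assoc, ← mul_assoc,
        normalForm_mul hEE hFF hEF, normalForm_mul hEE hFF hEF, mul_one, mul_one]
      refine hR _ (fun l => mul_mem (hX l) ?_) _ (fun l => mul_mem (hY l) ?_)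
      · rcases eq_or_ne l c with rfl | hlc
        · simpa using Submonoid.subset_closure ha
        · simp [hlc]
      · dsimp only
        split_ifs
        exacts [Submonoid.mem_powers τ, (Submonoid.powers τ).one_mem]
    · simp
  rw [jOnGenerator, Finset.sum_mul, Finset.mul_sum, map_sum, Finset.sum_congr rfl fun k hk => by
    rw [sub_mul, sub_mul, mul_sub, map_sub, hterm k hk, hterm k hk]]
  calc ∑ k ∈ Finset.Icc 1 m, (W k - W (k + 1)) = -(W (m + 1) - W 1) := by
        rw [← Finset.sum_Icc_sub hm, ← Finset.sum_neg_distrib]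
        simp only [neg_sub]
    _ = G (X * Pi.mulSingle 1 a) := by simp [W, hm]

lemma map_normalForm_mul_list_prod (hEE : ∀ k k', k ≠ k' → ∀ x y, Commute (E k x) (E k' y))
    (hFF : ∀ l l', l ≠ l' → ∀ x y, Commute (F l x) (F l' y))
    (hEF : ∀ k l x y, Commute (E k x) (F l y)) (hm : 1 ≤ m) (Φ : T →+ V) {S : Set A} {τ : B}
    {G : (ℕ → A) → V}
    (hG : ∀ X : ℕ → A, (∀ k, X k ∈ Submonoid.closure S) →
      ∀ Y : ℕ → B, (∀ l, Y l ∈ Submonoid.powers τ) → Φ (normalForm E F m X Y) = G X)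
    {J : A → T} (hJ : ∀ a ∈ S, J a = jOnGenerator E m (fun l => F l τ) a)
    (l : List A) (hl : ∀ a ∈ l, a ∈ S) :
    ∀ X : ℕ → A, (∀ k, X k ∈ Submonoid.closure S) → ∀ Y : ℕ → B, (∀ l, Y l ∈ Submonoid.powers τ) →
      Φ (normalForm E F m X Y * (l.map J).prod) = G (X * Pi.mulSingle 1 l.prod) := by
  induction l with
  | nil => simpa using hG
  | cons a l ih =>
    intro X hX Y hY
    have ha := hl a List.mem_cons_self
    rw [List.map_cons, List.prod_cons, hJ a ha, map_normalForm_mul_jOnGenerator_mul hEE hFF hEF hm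
      Φ (ih fun b hb => hl b (List.mem_cons_of_mem a hb)) ha hX hY, mul_assoc,
      ← Pi.mulSingle_mul, List.prod_cons]

end Telescoping

theorem marginal_eq_of_map_normalForm {A B T : Type*} [Ring A] [Algebra ℂ A] [Monoid B] [Ring T]
    [Algebra ℂ T] {E : ℕ → A →* T} {F : ℕ → B →* T} {m : ℕ}
    (hEE : ∀ k k', k ≠ k' → ∀ x y, Commute (E k x) (E k' y))
    (hFF : ∀ l l', l ≠ l' → ∀ x y, Commute (F l x) (F l' y))
    (hEF : ∀ k l x y, Commute (E k x) (F l y)) (hm : 1 ≤ m)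
    {S : Set A} (hS : Algebra.adjoin ℂ S = ⊤) {τ : B} (Φ : T →ₗ[ℂ] ℂ) (φ : A →ₗ[ℂ] ℂ)
    {ψ : A → ℂ} (hψ : ψ 1 = 1)
    (hΦ : ∀ X : ℕ → A, (∀ k, X k ∈ Submonoid.closure S) →
      ∀ Y : ℕ → B, (∀ l, Y l ∈ Submonoid.powers τ) → Φ (normalForm E F m X Y) = prodState φ ψ m X)
    (J : A →ₐ[ℂ] T) (hJ : ∀ a ∈ S, J a = jOnGenerator E m (fun l => F l τ) a) (x : A) :
    Φ (J x) = φ x := by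
  have hspan : Submodule.span ℂ (Submonoid.closure S : Set A) = ⊤ := by
    rw [← Algebra.adjoin_eq_span, hS, Algebra.top_toSubmodule]
  have hwords : ∀ w ∈ Submonoid.closure S, Φ (J w) = φ w := by
    intro w hw
    obtain ⟨l, hl, rfl⟩ := Submonoid.exists_list_of_mem_closure hw
    have := map_normalForm_mul_list_prod hEE hFF hEF hm Φ.toAddMonoidHom hΦ hJ l hl
      1 (fun _ => one_mem _) 1 (fun _ => one_mem _)
    rw [normalForm_one, one_mul, one_mul, prodState_mulSingle_one hψ hm] at this
    simpa [map_list_prod] using this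
  exact LinearMap.congr_fun (LinearMap.ext_on hspan (f := Φ.comp J.toLinearMap) hwords) x

section BooleanExt

variable {R S : Type*} [Ring R] [Algebra ℂ R] [Ring S] [Algebra ℂ S]
  {G : Set R} {ι : R → S} {t : S} {φ ψ : R →ₗ[ℂ] ℂ} {φt ψt : S →ₗ[ℂ] ℂ}

lemma IsBooleanExt.map_of_mem_powers (h : IsBooleanExt G ι t φ φt) {b : S}
    (hb : b ∈ Submonoid.powers t) : φt b = 1 := by
  obtain ⟨N, rfl⟩ := hb
  simpa using h.2 0 (fun _ => 1) (fun _ => N) (by omega) (by omega)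

lemma IsBooleanExt.map_of_mem_closure (h : IsBooleanExt G ι t φ φt) (hφ : φ 1 = 1) (hι : ι 1 = 1)
    {w : R} (hw : w ∈ Submonoid.closure G) : φt (ι w) = φ w := by
  obtain ⟨l, hl, rfl⟩ := Submonoid.exists_list_of_mem_closure hw
  rcases l with _ | ⟨a, l⟩
  · simpa [hι, hφ] using h.1
  · simpa using h.2 1 (fun _ => (a :: l).prod) (fun _ => 0)
      (fun _ _ => ⟨a :: l, List.cons_ne_nil a l, hl, rfl⟩) (by omega)

lemma prodState_comp_of_isBooleanExt (hφt : IsBooleanExt G ι t φ φt)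
    (hψt : IsBooleanExt G ι t ψ ψt) (hφ : φ 1 = 1) (hψ : ψ 1 = 1) (hι : ι 1 = 1) (m : ℕ)
    {X : ℕ → R} (hX : ∀ k, X k ∈ Submonoid.closure G) :
    prodState φt ψt m (fun k => ι (X k)) = prodState φ ψ m X :=
  ordProd_congr fun k _ _ => by
    split_ifs
    exacts [hφt.map_of_mem_closure hφ hι (hX k),
      hψt.map_of_mem_closure hψ hι (hX k)]

lemma prodState_eq_one_of_isBooleanExt (hφt : IsBooleanExt G ι t φ φt)
    (hψt : IsBooleanExt G ι t ψ ψt) (m : ℕ) {Y : ℕ → S} (hY : ∀ l, Y l ∈ Submonoid.powers t) :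
    prodState φt ψt m Y = 1 :=
  ordProd_eq_one fun k _ _ => by
    split_ifs
    exacts [hφt.map_of_mem_powers (hY k), hψt.map_of_mem_powers (hY k)]

end BooleanExt

/- For `i : Fin 2`, `A i` plays the role of `𝒜ᵢ₊₁` with generating set `G i`; `B i` that of
`𝒜̃ᵢ₊₁ = 𝒜ᵢ₊₁ * ℂ[t]`, with embedding `ι i` and separator `t i`; `T` that of
`𝒜̃^{(m)} = 𝒜̃₁^{⊗m} ⊗ 𝒜̃₂^{⊗m}`, with `e i k : B i → T` the embedding onto site `k` of
block `i`. -/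
theorem j_preserves_marginal_laws_general
    {A B : Fin 2 → Type*} {T : Type*}
    [∀ i, Ring (A i)] [∀ i, Algebra ℂ (A i)] [∀ i, StarRing (A i)]
    [∀ i, Ring (B i)] [∀ i, Algebra ℂ (B i)] [∀ i, StarRing (B i)]
    [Ring T] [Algebra ℂ T] [StarRing T]
    (G : ∀ i, Set (A i))
    (hA : ∀ i, Algebra.adjoin ℂ (G i) = ⊤)
    (ι : ∀ i, A i →⋆ₐ[ℂ] B i) (t : ∀ i, B i)
    (m : ℕ) (hm : 1 ≤ m)
    (e : ∀ i, ℕ → B i →⋆ₐ[ℂ] T)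
    (hcomm : ∀ (i i' : Fin 2) (k k' : ℕ), (i, k) ≠ (i', k') →
      ∀ (x : B i) (y : B i'), Commute (e i k x) (e i' k' y))
    -- the pairs of states `(φᵢ, ψᵢ)` on `A i` and their Boolean extensions `φt i`, `ψt i`
    (φ ψ : ∀ i, A i →ₗ[ℂ] ℂ) (hφ : ∀ i, IsState (φ i)) (hψ : ∀ i, IsState (ψ i))
    (φt ψt : ∀ i, B i →ₗ[ℂ] ℂ)
    (hφt : ∀ i, IsBooleanExt (G i) (⇑(ι i)) (t i) (φ i) (φt i))
    (hψt : ∀ i, IsBooleanExt (G i) (⇑(ι i)) (t i) (ψ i) (ψt i))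
    -- the tensor product state `Φ̃^{(m)} = φ̃₁ ⊗ ψ̃₁^{⊗(m-1)} ⊗ φ̃₂ ⊗ ψ̃₂^{⊗(m-1)}`
    (Φ : T →ₗ[ℂ] ℂ)
    (hΦ : ∀ (x : ℕ → B 0) (y : ℕ → B 1),
      Φ (ordProd (fun k => e 0 k (x k)) 1 m * ordProd (fun k => e 1 k (y k)) 1 m) =
        ordProd (fun k => if k = 1 then φt 0 (x k) else ψt 0 (x k)) 1 m *
          ordProd (fun k => if k = 1 then φt 1 (y k) else ψt 1 (y k)) 1 m)
    -- the *-homomorphisms `j₁^{(m)}`, `j₂^{(m)}`, given on the generators by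
    -- `j₁^{(m)}(a) = Σ_{k=1}^m (i_{k,m}(a) - i_{k+1,m}(a)) ⊗ t_{[k,m]}` and
    -- `j₂^{(m)}(b) = Σ_{k=1}^m t_{[k,m]} ⊗ (i_{k,m}(b) - i_{k+1,m}(b))`
    (j : ∀ i, A i →⋆ₐ[ℂ] T)
    (hj1 : ∀ a ∈ G 0, j 0 a = ∑ k ∈ Finset.Icc 1 m,
      (embSite (fun l x => e 0 l x) m k (ι 0 a) - embSite (fun l x => e 0 l x) m (k + 1) (ι 0 a)) *
        tBlock (fun l => e 1 l (t 1)) k m)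
    (hj2 : ∀ b ∈ G 1, j 1 b = ∑ k ∈ Finset.Icc 1 m,
      tBlock (fun l => e 0 l (t 0)) k m *
        (embSite (fun l x => e 1 l x) m k (ι 1 b) - embSite (fun l x => e 1 l x) m (k + 1) (ι 1 b)))
    :
    -- `Φ̃^{(m)} ∘ j₁^{(m)} = φ₁` and `Φ̃^{(m)} ∘ j₂^{(m)} = φ₂`
    (∀ x : A 0, Φ (j 0 x) = φ 0 x) ∧ (∀ y : A 1, Φ (j 1 y) = φ 1 y) := by
  have hsite : ∀ i k k', k ≠ k' → ∀ x y : B i, Commute (e i k x) (e i k' y) :=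
    fun i k k' h => hcomm i i k k' (by simpa using h)
  have hcross : ∀ k l (x : B 0) (y : B 1), Commute (e 0 k x) (e 1 l y) :=
    fun k l => hcomm 0 1 k l (by simp)
  have hΦnf : ∀ x y, Φ (normalForm (fun k => (e 0 k : B 0 →* T)) (fun l => (e 1 l : B 1 →* T)) m
      x y) = prodState (φt 0) (ψt 0) m x * prodState (φt 1) (ψt 1) m y := hΦ
  have hwords : ∀ i (X : ℕ → A i), (∀ k, X k ∈ Submonoid.closure (G i)) →
      prodState (φt i) (ψt i) m (fun k => ι i (X k)) = prodState (φ i) (ψ i) m X :=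
    fun i X => prodState_comp_of_isBooleanExt (hφt i) (hψt i) (hφ i).1 (hψ i).1 (map_one _) m
  have hpowers : ∀ i (Y : ℕ → B i), (∀ l, Y l ∈ Submonoid.powers (t i)) →
      prodState (φt i) (ψt i) m Y = 1 :=
    fun i Y => prodState_eq_one_of_isBooleanExt (hφt i) (hψt i) m
  constructor
  · refine marginal_eq_of_map_normalForm (E := fun k => (e 0 k : B 0 →* T).comp (ι 0 : A 0 →* B 0))
      (F := fun l => (e 1 l : B 1 →* T)) (fun k k' h _ _ => hsite 0 k k' h _ _)
      (fun l l' h _ _ => hsite 1 l l' h _ _) (fun k l _ _ => hcross k l _ _) hm (hA 0) Φ (φ 0)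
      (hψ 0).1 (fun X hX Y hY => ?_) (j 0).toAlgHom hj1
    rw [← hwords 0 X hX]
    exact (hΦnf _ Y).trans (by rw [hpowers 1 Y hY, mul_one]; rfl)
  · have hcross' : ∀ k l x y, Commute (((e 1 k : B 1 →* T).comp (ι 1 : A 1 →* B 1)) x)
        ((e 0 l : B 0 →* T) y) := fun k l _ _ => (hcross l k _ _).symm
    refine marginal_eq_of_map_normalForm (E := fun k => (e 1 k : B 1 →* T).comp (ι 1 : A 1 →* B 1))
      (F := fun l => (e 0 l : B 0 →* T)) (τ := t 0) (fun k k' h _ _ => hsite 1 k k' h _ _)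
      (fun l l' h _ _ => hsite 0 l l' h _ _) hcross' hm (hA 1) Φ (φ 1) (hψ 1).1
      (fun X hX Y hY => ?_) (j 1).toAlgHom fun b hb => ?_
    · rw [normalForm_swap hcross', ← hwords 1 X hX]
      exact (hΦnf Y _).trans (by rw [hpowers 0 Y hY, one_mul]; rfl)
    · exact (hj2 b hb).trans (sum_tBlock_mul_eq_jOnGenerator (fun k l x => hcross' k l x (t 0)) b)

theorem j_preserves_marginal_laws
    {A B : Fin 2 → Type*} {T : Type*}
    [∀ i, Ring (A i)] [∀ i, Algebra ℂ (A i)] [∀ i, StarRing (A i)] [∀ i, StarModule ℂ (A i)]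
    [∀ i, Ring (B i)] [∀ i, Algebra ℂ (B i)] [∀ i, StarRing (B i)] [∀ i, StarModule ℂ (B i)]
    [Ring T] [Algebra ℂ T] [StarRing T] [StarModule ℂ T]
    (G : ∀ i, Set (A i)) (hG : ∀ i, ∀ x ∈ G i, star x ∈ G i)
    (hA : ∀ i, Algebra.adjoin ℂ (G i) = ⊤)
    (ι : ∀ i, A i →⋆ₐ[ℂ] B i) (t : ∀ i, B i) (ht : ∀ i, star (t i) = t i)
    (hB : ∀ i, Algebra.adjoin ℂ (Set.range (ι i) ∪ {t i}) = ⊤)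
    (m : ℕ) (hm : 1 ≤ m)
    (e : ∀ i, ℕ → B i →⋆ₐ[ℂ] T)
    (hcomm : ∀ (i i' : Fin 2) (k k' : ℕ), (i, k) ≠ (i', k') →
      ∀ (x : B i) (y : B i'), Commute (e i k x) (e i' k' y))
    (hT : Algebra.adjoin ℂ
      {x : T | ∃ (i : Fin 2) (k : ℕ), 1 ≤ k ∧ k ≤ m ∧ ∃ b : B i, x = e i k b} = ⊤)
    -- the pairs of states `(φᵢ, ψᵢ)` on `A i` and their Boolean extensions `φt i`, `ψt i`
    (φ ψ : ∀ i, A i →ₗ[ℂ] ℂ) (hφ : ∀ i, IsState (φ i)) (hψ : ∀ i, IsState (ψ i))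
    (φt ψt : ∀ i, B i →ₗ[ℂ] ℂ)
    (hφt : ∀ i, IsBooleanExt (G i) (⇑(ι i)) (t i) (φ i) (φt i))
    (hψt : ∀ i, IsBooleanExt (G i) (⇑(ι i)) (t i) (ψ i) (ψt i))
    -- the tensor product state `Φ̃^{(m)} = φ̃₁ ⊗ ψ̃₁^{⊗(m-1)} ⊗ φ̃₂ ⊗ ψ̃₂^{⊗(m-1)}`
    (Φ : T →ₗ[ℂ] ℂ)
    (hΦ : ∀ (x : ℕ → B 0) (y : ℕ → B 1),
      Φ (ordProd (fun k => e 0 k (x k)) 1 m * ordProd (fun k => e 1 k (y k)) 1 m) =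
        ordProd (fun k => if k = 1 then φt 0 (x k) else ψt 0 (x k)) 1 m *
          ordProd (fun k => if k = 1 then φt 1 (y k) else ψt 1 (y k)) 1 m)
    -- the *-homomorphisms `j₁^{(m)}`, `j₂^{(m)}`, given on the generators by
    -- `j₁^{(m)}(a) = Σ_{k=1}^m (i_{k,m}(a) - i_{k+1,m}(a)) ⊗ t_{[k,m]}` and
    -- `j₂^{(m)}(b) = Σ_{k=1}^m t_{[k,m]} ⊗ (i_{k,m}(b) - i_{k+1,m}(b))`
    (j : ∀ i, A i →⋆ₐ[ℂ] T)
    (hj1 : ∀ a ∈ G 0, j 0 a = ∑ k ∈ Finset.Icc 1 m,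
      (embSite (fun l x => e 0 l x) m k (ι 0 a) - embSite (fun l x => e 0 l x) m (k + 1) (ι 0 a)) *
        tBlock (fun l => e 1 l (t 1)) k m)
    (hj2 : ∀ b ∈ G 1, j 1 b = ∑ k ∈ Finset.Icc 1 m,
      tBlock (fun l => e 0 l (t 0)) k m *
        (embSite (fun l x => e 1 l x) m k (ι 1 b) - embSite (fun l x => e 1 l x) m (k + 1) (ι 1 b)))
    :
    -- `Φ̃^{(m)} ∘ j₁^{(m)} = φ₁` and `Φ̃^{(m)} ∘ j₂^{(m)} = φ₂`
    (∀ x : A 0, Φ (j 0 x) = φ 0 x) ∧ (∀ y : A 1, Φ (j 1 y) = φ 1 y) :=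
  j_preserves_marginal_laws_general G hA ι t m hm e hcomm φ ψ hφ hψ φt ψt hφt hψt Φ hΦ j hj1 hj2
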